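/- Let X be a real Banach space, T : X ⇉ X* a maximal monotone operator, and h ∈ H_a(T). Then the family L(h), ordered by the pointwise order, has a minimal element. -/

import Mathlib

/-! Zorn's lemma, downwards. The transform `J` satisfies `J f ≤ g ↔ J g ≤ f`, so for a chain `c`
in `L(h)` every `J j` lies below every `k ∈ c` (compare `j` and `k`), hence `J (inf c) ≤ inf c`.
The lower bound is then `J (J (inf c)) ≤ inf c`, which is convex and lower semicontinuous as a
supremum of continuous affine functions. It stays above the duality product because
`J (inf c)` dominates the Fitzpatrick function of `T`, which dominates the product by maximality. -/

/- Setting: `X` is a real Banach space, `NormedSpace.Dual ℝ X` its topological dual.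
A point-to-set operator `T : X ⇉ X*` is identified with its graph,
a subset of `X × NormedSpace.Dual ℝ X`.  Extended-real-valued functions
(`ℝ ∪ {+∞}`) are modelled by `EReal`. -/

noncomputable section

variable {X : Type*} [NormedAddCommGroup X] [NormedSpace ℝ X]

/-- The duality pairing `⟨x, x*⟩ = x*(x)` of a pair `p = (x, x*)`. -/
def pairingFn (p : X × StrongDual ℝ X) : ℝ := p.2 p.1

/-- Convexity for extended-real-valued functions. -/
def EConvexOn {E : Type*} [AddCommMonoid E] [Module ℝ E] (h : E → EReal) : Prop :=
  ∀ p q : E, ∀ a b : ℝ, 0 ≤ a → 0 ≤ b → a + b = 1 →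
    h (a • p + b • q) ≤ (a : EReal) * h p + (b : EReal) * h q

/-- `T` is a monotone operator: `⟨x - y, x* - y*⟩ ≥ 0` on the graph. -/
def MonotoneOp (T : Set (X × StrongDual ℝ X)) : Prop :=
  ∀ p ∈ T, ∀ q ∈ T, 0 ≤ (p.2 - q.2) (p.1 - q.1)

/-- `T` is maximal monotone. -/
def MaximalMonotoneOp (T : Set (X × StrongDual ℝ X)) : Prop :=
  MonotoneOp T ∧
    ∀ p : X × StrongDual ℝ X, (∀ q ∈ T, 0 ≤ (p.2 - q.2) (p.1 - q.1)) → p ∈ T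

/-- The transform `J h (x, x*) = sup_{(y, y*)} ⟨x, y*⟩ + ⟨y, x*⟩ - h (y, y*)`,
i.e. `J h (x, x*) = h* (x*, x)` via the canonical injection `X ↪ X**`. -/
def JT (h : X × StrongDual ℝ X → EReal) : X × StrongDual ℝ X → EReal :=
  fun p => ⨆ q : X × StrongDual ℝ X, (((q.2 p.1 + p.2 q.1 : ℝ) : EReal) - h q)

/-- The family `H(T)` of convex lower semicontinuous functions on `X × X*`
majorizing the duality product and coinciding with it on `T`. -/
def HT (T : Set (X × StrongDual ℝ X)) : Set (X × StrongDual ℝ X → EReal) :=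
  { h | EConvexOn h ∧ LowerSemicontinuous h ∧
      (∀ p : X × StrongDual ℝ X, (pairingFn p : EReal) ≤ h p) ∧
      (∀ p ∈ T, h p = (pairingFn p : EReal)) }

/-- The subfamily `H_a(T) = { h ∈ H(T) | h ≥ J h }`. -/
def Ha (T : Set (X × StrongDual ℝ X)) : Set (X × StrongDual ℝ X → EReal) :=
  { h | h ∈ HT T ∧ JT h ≤ h }

/-- For `h ∈ H(T)`, the family `L(h) = { g ∈ H(T) | h ≥ g ≥ J g }`. -/
def Lfam (T : Set (X × StrongDual ℝ X)) (h : X × StrongDual ℝ X → EReal) :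
    Set (X × StrongDual ℝ X → EReal) :=
  { g | g ∈ HT T ∧ g ≤ h ∧ JT g ≤ g }

/-- The Fenchel–Legendre conjugate `f*(x*) = sup_x ⟨x, x*⟩ - f x`. -/
def fconj (f : X → EReal) : StrongDual ℝ X → EReal :=
  fun x' => ⨆ x : X, (((x' x : ℝ) : EReal) - f x)

/-- The `ε`-subdifferential:
`∂_ε f (x) = { x* | f y ≥ f x + ⟨y - x, x*⟩ - ε for all y }`. -/
def epsSubdiff (f : X → EReal) (ε : ℝ) (x : X) : Set (StrongDual ℝ X) :=
  { x' | ∀ y : X, f x + ((x' (y - x) - ε : ℝ) : EReal) ≤ f y }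

/-- The graph of the subdifferential `∂f = ∂_0 f`. -/
def subdiffGraph (f : X → EReal) : Set (X × StrongDual ℝ X) :=
  { p | p.2 ∈ epsSubdiff f 0 p.1 }

/-- The `ε`-enlargement `T^ε (x) = { x* | ⟨x - y, x* - y*⟩ ≥ -ε for all (y, y*) ∈ T }`. -/
def enl (T : Set (X × StrongDual ℝ X)) (ε : ℝ) (x : X) :
    Set (StrongDual ℝ X) :=
  { x' | ∀ q ∈ T, -ε ≤ (x' - q.2) (x - q.1) }

/-- The Fitzpatrick function
`φ_T (x, x*) = sup_{(y, y*) ∈ T} ⟨x, y*⟩ + ⟨y, x*⟩ - ⟨y, y*⟩`. -/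
def fitz (T : Set (X × StrongDual ℝ X)) : X × StrongDual ℝ X → EReal :=
  fun p => ⨆ q ∈ T, ((q.2 p.1 + p.2 q.1 - q.2 q.1 : ℝ) : EReal)

namespace EReal

lemma coe_sub_coe_sub (a : ℝ) (x : EReal) : (a : EReal) - ((a : EReal) - x) = x := by
  rw [sub_eq_add_neg (a : EReal) x, sub_add_cancel_left, neg_neg]

lemma coe_sub_le_comm {a : ℝ} {x y : EReal} : (a : EReal) - x ≤ y ↔ (a : EReal) - y ≤ x :=
  ⟨fun h => coe_sub_coe_sub a x ▸ sub_le_sub le_rfl h,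
    fun h => coe_sub_coe_sub a y ▸ sub_le_sub le_rfl h⟩

lemma coe_convexComb_sub_le {a b : ℝ} (ha : 0 ≤ a) (hb : 0 ≤ b) (hab : a + b = 1) (u v : ℝ)
    (c : EReal) :
    ((a * u + b * v : ℝ) : EReal) - c ≤ (a : EReal) * ((u : EReal) - c) + b * ((v : EReal) - c) := by
  induction c using EReal.rec with
  | top => simp
  | coe r =>
    norm_cast
    linear_combination r * hab
  | bot =>
    simp only [coe_sub_bot, top_le_iff]
    rcases ha.eq_or_lt with rfl | ha'
    · obtain rfl : b = 1 := by linarith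
      simp
    · rw [coe_mul_top_of_pos ha', top_add_of_ne_bot]
      exact ne_bot_of_le_ne_bot zero_ne_bot (EReal.mul_nonneg (EReal.coe_nonneg.mpr hb) le_top)

end EReal

lemma EConvexOn.iSup {E ι : Type*} [AddCommMonoid E] [Module ℝ E] {f : ι → E → EReal}
    (hf : ∀ i, EConvexOn (f i)) : EConvexOn fun x => ⨆ i, f i x := by
  intro p q a b ha hb hab
  refine iSup_le fun i => (hf i p q a b ha hb hab).trans ?_
  exact add_le_add (mul_le_mul_of_nonneg_left (le_iSup (f · p) i) (by exact_mod_cast ha))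
    (mul_le_mul_of_nonneg_left (le_iSup (f · q) i) (by exact_mod_cast hb))

lemma econvexOn_coe_sub {E : Type*} [AddCommMonoid E] [Module ℝ E] (ℓ : E →ₗ[ℝ] ℝ) (c : EReal) :
    EConvexOn fun x => (ℓ x : EReal) - c := by
  intro p q a b ha hb hab
  simpa using EReal.coe_convexComb_sub_le ha hb hab (ℓ p) (ℓ q) c

lemma lowerSemicontinuous_coe_sub {E : Type*} [TopologicalSpace E] {ℓ : E → ℝ}
    (hℓ : Continuous ℓ) (c : EReal) : LowerSemicontinuous fun x => (ℓ x : EReal) - c := by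
  induction c using EReal.rec with
  | bot => simpa using lowerSemicontinuous_const
  | coe r => exact (continuous_coe_real_ereal.comp (hℓ.sub continuous_const)).lowerSemicontinuous
  | top => simpa using lowerSemicontinuous_const

def dualityCoupling (q : X × StrongDual ℝ X) : X × StrongDual ℝ X →L[ℝ] ℝ :=
  q.2.comp (ContinuousLinearMap.fst ℝ X (StrongDual ℝ X)) +
    (ContinuousLinearMap.apply ℝ ℝ q.1).comp (ContinuousLinearMap.snd ℝ X (StrongDual ℝ X))

lemma JT_eq_iSup_dualityCoupling (f : X × StrongDual ℝ X → EReal) :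
    JT f = fun p => ⨆ q, (dualityCoupling q p : EReal) - f q :=
  rfl

lemma econvexOn_JT (f : X × StrongDual ℝ X → EReal) : EConvexOn (JT f) := by
  rw [JT_eq_iSup_dualityCoupling]
  exact EConvexOn.iSup fun q => econvexOn_coe_sub (dualityCoupling q).toLinearMap (f q)

lemma lowerSemicontinuous_JT (f : X × StrongDual ℝ X → EReal) : LowerSemicontinuous (JT f) := by
  rw [JT_eq_iSup_dualityCoupling]
  exact lowerSemicontinuous_iSup fun q =>
    lowerSemicontinuous_coe_sub (dualityCoupling q).continuous (f q)

lemma JT_le_comm {f g : X × StrongDual ℝ X → EReal} : JT f ≤ g ↔ JT g ≤ f := by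
  have key : ∀ {f₁ f₂ : X × StrongDual ℝ X → EReal}, JT f₁ ≤ f₂ → JT f₂ ≤ f₁ := by
    intro f₁ f₂ hf p
    refine iSup_le fun q => EReal.coe_sub_le_comm.mp ?_
    rw [add_comm]
    exact (le_iSup (fun r => ((r.2 q.1 + q.2 r.1 : ℝ) : EReal) - f₁ r) p).trans (hf q)
  exact ⟨key, key⟩

lemma JT_JT_le (f : X × StrongDual ℝ X → EReal) : JT (JT f) ≤ f :=
  JT_le_comm.mp le_rfl

lemma antitone_JT : Antitone (JT (X := X)) := fun f _ hfg =>
  JT_le_comm.mp ((JT_JT_le f).trans hfg)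

lemma JT_sInf_le_sInf {c : Set (X × StrongDual ℝ X → EReal)} (hc : IsChain (· ≤ ·) c)
    (hcJ : ∀ k ∈ c, JT k ≤ k) : JT (sInf c) ≤ sInf c :=
  le_sInf fun j hj => JT_le_comm.mpr <| le_sInf fun k hk => by
    rcases hc.total hj hk with hjk | hkj
    · exact (hcJ j hj).trans hjk
    · exact (antitone_JT hkj).trans (hcJ k hk)

lemma fitz_le_JT {T : Set (X × StrongDual ℝ X)} {g : X × StrongDual ℝ X → EReal}
    (hg : ∀ q ∈ T, g q ≤ pairingFn q) : fitz T ≤ JT g := fun p =>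
  iSup₂_le fun q hq => le_iSup_of_le q <| by
    rw [EReal.coe_sub]
    exact EReal.sub_le_sub le_rfl (hg q hq)

lemma MaximalMonotoneOp.pairingFn_le_fitz {T : Set (X × StrongDual ℝ X)}
    (hT : MaximalMonotoneOp T) (p : X × StrongDual ℝ X) : (pairingFn p : EReal) ≤ fitz T p := by
  obtain ⟨q, hq, hpq⟩ : ∃ q ∈ T, (p.2 - q.2) (p.1 - q.1) ≤ 0 := by
    by_contra! hpos
    have hp : p ∈ T := hT.2 p fun q hq => (hpos q hq).le
    simpa using hpos p hp
  refine le_iSup₂_of_le q hq (EReal.coe_le_coe_iff.mpr ?_)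
  simp only [pairingFn, sub_apply, map_sub] at hpq ⊢
  linarith

lemma JT_JT_mem_HT {T : Set (X × StrongDual ℝ X)} (hT : MaximalMonotoneOp T)
    {g : X × StrongDual ℝ X → EReal} (hgT : ∀ q ∈ T, g q ≤ pairingFn q) (hJg : JT g ≤ g) :
    JT (JT g) ∈ HT T := by
  have hpairing : ∀ p, (pairingFn p : EReal) ≤ JT (JT g) p := fun p =>
    calc (pairingFn p : EReal) ≤ fitz T p := hT.pairingFn_le_fitz p
      _ ≤ JT g p := fitz_le_JT hgT p
      _ ≤ JT (JT g) p := antitone_JT hJg p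
  refine ⟨econvexOn_JT _, lowerSemicontinuous_JT _, hpairing, fun q hq => ?_⟩
  exact le_antisymm ((JT_JT_le g q).trans (hgT q hq)) (hpairing q)

lemma JT_JT_sInf_mem_Lfam {T : Set (X × StrongDual ℝ X)} (hT : MaximalMonotoneOp T)
    {h : X × StrongDual ℝ X → EReal} {c : Set (X × StrongDual ℝ X → EReal)}
    (hcL : c ⊆ Lfam T h) (hc : IsChain (· ≤ ·) c) {k : X × StrongDual ℝ X → EReal}
    (hk : k ∈ c) : JT (JT (sInf c)) ∈ Lfam T h := by
  have hJ : JT (sInf c) ≤ sInf c := JT_sInf_le_sInf hc fun k hk => (hcL hk).2.2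
  have hcT : ∀ q ∈ T, sInf c q ≤ pairingFn q := fun q hq =>
    (sInf_le hk q).trans ((hcL hk).1.2.2.2 q hq).le
  refine ⟨JT_JT_mem_HT hT hcT hJ, ?_, ?_⟩
  · exact (JT_JT_le _).trans ((sInf_le hk).trans (hcL hk).2.1)
  · exact (JT_JT_le _).trans (antitone_JT hJ)

theorem exists_minimal_in_L_general
    (T : Set (X × StrongDual ℝ X)) (hT : MaximalMonotoneOp T)
    (h : X × StrongDual ℝ X → EReal) (hh : h ∈ Ha T) :
    ∃ h₀, Minimal (· ∈ Lfam T h) h₀ := by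
  obtain ⟨h₀, -, hmin⟩ := zorn_le_nonempty₀ (α := (X × StrongDual ℝ X → EReal)ᵒᵈ) (Lfam T h)
    (fun c hcL hc k hk => ⟨_, JT_JT_sInf_mem_Lfam hT hcL hc.symm hk,
      fun j hj => (JT_JT_le _).trans (sInf_le hj)⟩) h ⟨hh.1, le_rfl, hh.2⟩
  exact ⟨h₀, hmin⟩

/-- for `h ∈ H_a(T)`, the family `L(h)` has a minimal element with respect
to the pointwise order. -/
theorem exists_minimal_in_L [CompleteSpace X]
    (T : Set (X × StrongDual ℝ X)) (hT : MaximalMonotoneOp T)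
    (h : X × StrongDual ℝ X → EReal) (hh : h ∈ Ha T) :
    ∃ h₀, Minimal (· ∈ Lfam T h) h₀ :=
  exists_minimal_in_L_general T hT h hh
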